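/- Let f be a smooth function on ℂ such that |f| is subharmonic on the open set where f ≠ 0, f vanishes on the complement of an open set D ⊂ ℂ with D ≠ ℂ, f is bounded, and f tends to 0 at infinity. For w₀ ∈ ∂D define f'(w) = f(w)/√|w − w₀| on D. If f' extends continuously by 0 to ∂D ∪ {∞}, then f = 0 on D. -/

import Mathlib

/-- A function is subharmonic on an open set `S` if it is upper semicontinuous on `S`
and satisfies the sub-mean value inequality on circles whose closed disks lie in `S`. -/
def SubharmonicOn (u : ℂ → ℝ) (S : Set ℂ) : Prop :=
  UpperSemicontinuousOn u S ∧
  ∀ c : ℂ, ∀ r : ℝ, 0 < r → Metric.closedBall c r ⊆ S →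
    u c ≤ (2 * Real.pi)⁻¹ * ∫ θ in (0:ℝ)..(2 * Real.pi), u (circleMap c r θ)

open Real Filter Set Metric intervalIntegral in
lemma aux_circle_eq (u : ℂ → ℝ) (hu : Continuous u) (z : ℂ) (r : ℝ) (hr : 0 < r)
    (hle : ∀ w, u w ≤ u z)
    (hmean : u z ≤ (2 * Real.pi)⁻¹ * ∫ θ in (0:ℝ)..(2 * Real.pi), u (circleMap z r θ))
    (w : ℂ) (hw : ‖w - z‖ = r) : u w = u z := by
  by_contra hne
  set M := u z with hM
  clear_value M
  have hlt : u w < M := lt_of_le_of_ne (hle w) hne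
  have hwz : w - z ≠ 0 := by
    intro h; rw [h] at hw; simp at hw; linarith
  set θ₀ := Complex.arg (w - z) with hθ₀
  have hcm : circleMap z r θ₀ = w := by
    have h := Complex.norm_mul_exp_arg_mul_I (w - z)
    rw [hw] at h
    simp only [circleMap]
    rw [hθ₀, h]; ring
  set θ₁ : ℝ := if θ₀ < 0 then θ₀ + 2 * Real.pi else θ₀ with hθ₁
  have hcm1 : circleMap z r θ₁ = w := by
    rw [hθ₁]; split_ifs with h
    · rw [← hcm]; exact periodic_circleMap z r θ₀
    · exact hcm
  have hπ := Real.pi_pos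
  have hmem : θ₁ ∈ Set.Icc 0 (2 * Real.pi) := by
    have h1 := Complex.neg_pi_lt_arg (w - z)
    have h2 := Complex.arg_le_pi (w - z)
    rw [← hθ₀] at h1 h2
    rw [hθ₁]; split_ifs with h <;> constructor <;> linarith
  set g : ℝ → ℝ := fun θ => M - u (circleMap z r θ) with hg
  clear_value g
  have hgc : Continuous g := by
    rw [hg]; exact continuous_const.sub (hu.comp (continuous_circleMap z r))
  have hgnn : ∀ θ, 0 ≤ g θ := by
    intro θ; simp only [hg]; exact sub_nonneg.2 (hle _)
  have hgpos : 0 < g θ₁ := by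
    simp only [hg, hcm1]; linarith
  obtain ⟨δ, hδ, hball⟩ := Metric.continuousAt_iff.1 hgc.continuousAt (g θ₁ / 2) (by linarith)
  set c := max 0 (θ₁ - δ) with hc
  set d := min (2 * Real.pi) (θ₁ + δ) with hd
  have hcd : c < d := by
    rcases hmem with ⟨h1, h2⟩
    simp only [hc, hd, lt_min_iff, max_lt_iff]
    refine ⟨⟨by linarith, by linarith⟩, ⟨by linarith, by linarith⟩⟩
  have hposcd : ∀ x ∈ Set.Ioo c d, 0 < g x := by
    intro x hx
    have hcle : θ₁ - δ ≤ c := le_max_right _ _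
    have hdle : d ≤ θ₁ + δ := min_le_right _ _
    have hx1 : |x - θ₁| < δ := by
      rw [abs_sub_lt_iff]
      exact ⟨by linarith [hx.2], by linarith [hx.1]⟩
    have h2 := hball (show dist x θ₁ < δ by rwa [Real.dist_eq])
    rw [Real.dist_eq, abs_sub_lt_iff] at h2
    linarith [h2.1, h2.2]
  have hintpos : 0 < ∫ x in c..d, g x :=
    intervalIntegral_pos_of_pos_on (hgc.intervalIntegrable _ _) hposcd hcd
  have h0c : (0:ℝ) ≤ c := le_max_left _ _
  have hd2π : d ≤ 2 * Real.pi := min_le_left _ _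
  have hsplit : ∫ x in (0:ℝ)..(2*Real.pi), g x =
      ((∫ x in (0:ℝ)..c, g x) + ∫ x in c..d, g x) + ∫ x in d..(2*Real.pi), g x := by
    rw [integral_add_adjacent_intervals (hgc.intervalIntegrable _ _)
      (hgc.intervalIntegrable _ _),
      integral_add_adjacent_intervals (hgc.intervalIntegrable _ _)
      (hgc.intervalIntegrable _ _)]
  have hint1 : 0 ≤ ∫ x in (0:ℝ)..c, g x :=
    integral_nonneg h0c (fun x _ => hgnn x)
  have hint3 : 0 ≤ ∫ x in d..(2*Real.pi), g x :=
    integral_nonneg hd2π (fun x _ => hgnn x)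
  have htot : 0 < ∫ x in (0:ℝ)..(2*Real.pi), g x := by
    rw [hsplit]; linarith
  -- but the total integral is ≤ 0 by the mean inequality
  have hgint : (∫ x in (0:ℝ)..(2*Real.pi), g x)
      = 2 * Real.pi * M - ∫ θ in (0:ℝ)..(2*Real.pi), u (circleMap z r θ) := by
    have hic : IntervalIntegrable (fun θ => u (circleMap z r θ)) MeasureTheory.volume 0 (2*Real.pi) :=
      (hu.comp (continuous_circleMap z r)).intervalIntegrable _ _
    simp only [hg]
    rw [integral_sub intervalIntegrable_const hic]
    simp [mul_comm]
  have hmean' : 2 * Real.pi * M ≤ ∫ θ in (0:ℝ)..(2*Real.pi), u (circleMap z r θ) := by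
    have h2π : (0:ℝ) < 2 * Real.pi := by linarith
    calc 2 * Real.pi * M ≤ 2 * Real.pi * ((2 * Real.pi)⁻¹ *
        ∫ θ in (0:ℝ)..(2*Real.pi), u (circleMap z r θ)) := by
          exact mul_le_mul_of_nonneg_left hmean (le_of_lt h2π)
      _ = ∫ θ in (0:ℝ)..(2*Real.pi), u (circleMap z r θ) := by
          field_simp
  rw [hgint] at htot
  linarith

open Real Filter Set Metric intervalIntegral in
theorem stmt11 (f : ℂ → ℂ) (D : Set ℂ) (w₀ : ℂ)
    (hf : ContDiff ℝ (⊤ : ℕ∞) f)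
    (hsub : SubharmonicOn (fun w => ‖f w‖) {w | f w ≠ 0})
    (hD : IsOpen D) (hDne : D ≠ Set.univ)
    (hvanish : ∀ w ∉ D, f w = 0)
    (hbdd : ∃ M : ℝ, ∀ w, ‖f w‖ ≤ M)
    (hinf : Filter.Tendsto f (Filter.comap (fun z : ℂ => ‖z‖) Filter.atTop) (nhds 0))
    (hw₀ : w₀ ∈ frontier D)
    (hextbd : ∀ ζ ∈ frontier D,
      Filter.Tendsto (fun w => f w / (Real.sqrt (‖w - w₀‖) : ℂ))
        (nhdsWithin ζ D) (nhds 0))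
    (hextinf : Filter.Tendsto (fun w => f w / (Real.sqrt (‖w - w₀‖) : ℂ))
        (Filter.comap (fun z : ℂ => ‖z‖) Filter.atTop ⊓ Filter.principal D) (nhds 0)) :
    ∀ w ∈ D, f w = 0 := by
  suffices h : ∀ w, f w = 0 by exact fun w _ => h w
  by_contra hc
  push_neg at hc
  obtain ⟨w₁, hw₁⟩ := hc
  set u : ℂ → ℝ := fun w => ‖f w‖ with hu_def
  have hu : Continuous u := continuous_norm.comp hf.continuous
  have hm : 0 < u w₁ := by
    simp only [hu_def]
    exact norm_pos_iff.mpr hw₁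
  -- beyond some radius, |f| < u w₁
  have hev : ∀ᶠ w in Filter.comap (fun z : ℂ => ‖z‖) Filter.atTop, ‖f w‖ < u w₁ := by
    have h1 := Metric.tendsto_nhds.mp hinf (u w₁) hm
    filter_upwards [h1] with w hw
    simpa [Complex.dist_eq] using hw
  rw [Filter.eventually_comap] at hev
  rw [Filter.eventually_atTop] at hev
  obtain ⟨R, hR⟩ := hev
  -- compact exhaustion and global max
  set K := Metric.closedBall (0:ℂ) (max R ‖w₁‖) with hK_def
  have hK : IsCompact K := isCompact_closedBall _ _
  have hw₁K : w₁ ∈ K := by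
    simp only [hK_def, Metric.mem_closedBall, Complex.dist_eq, sub_zero]
    exact le_max_right _ _
  obtain ⟨z₁, hz₁K, hz₁max⟩ := hK.exists_isMaxOn ⟨w₁, hw₁K⟩ hu.continuousOn
  set M := u z₁ with hM_def
  have hMm : u w₁ ≤ M := hz₁max hw₁K
  have hM0 : 0 < M := lt_of_lt_of_le hm hMm
  have hle : ∀ w, u w ≤ M := by
    intro w
    by_cases hwK : w ∈ K
    · exact hz₁max hwK
    · have hout : max R ‖w₁‖ < ‖w‖ := by
        simp only [hK_def, Metric.mem_closedBall, Complex.dist_eq, sub_zero, not_le] at hwK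
        exact hwK
      have hRw : R ≤ ‖w‖ := le_of_lt (lt_of_le_of_lt (le_max_left _ _) hout)
      have := hR ‖w‖ hRw w rfl
      have : u w < u w₁ := this
      linarith
  -- the set where the max is attained is clopen
  set A := {w : ℂ | u w = M} with hA_def
  have hAne : A.Nonempty := ⟨z₁, rfl⟩
  have hAclosed : IsClosed A := isClosed_eq hu continuous_const
  have hS : IsOpen {w : ℂ | f w ≠ 0} := by
    have : {w : ℂ | f w ≠ 0} = (f ⁻¹' {0})ᶜ := by
      ext w; simp
    rw [this]
    exact (isClosed_singleton.preimage hf.continuous).isOpen_compl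
  have hAopen : IsOpen A := by
    rw [Metric.isOpen_iff]
    intro z hz
    have hzM : u z = M := hz
    have hfz : f z ≠ 0 := by
      intro h
      rw [hu_def] at hzM
      simp only [h, norm_zero] at hzM
      linarith
    obtain ⟨ε, hε, hball⟩ := Metric.isOpen_iff.mp hS z hfz
    refine ⟨ε/2, by linarith, ?_⟩
    intro w hwb
    by_cases hwz : w = z
    · rw [hwz]; exact hz
    · set r := ‖w - z‖ with hr_def
      have hr : 0 < r := norm_pos_iff.mpr (sub_ne_zero.2 hwz)
      have hrε : r < ε/2 := by
        rw [Metric.mem_ball, Complex.dist_eq] at hwb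
        exact hwb
      have hrs : Metric.closedBall z r ⊆ {w : ℂ | f w ≠ 0} := by
        intro x hx
        apply hball
        rw [Metric.mem_closedBall] at hx
        rw [Metric.mem_ball]
        linarith
      have hmean := hsub.2 z r hr hrs
      have hle' : ∀ w', u w' ≤ u z := by
        intro w'; rw [hzM]; exact hle w'
      have := aux_circle_eq u hu z r hr hle' hmean w rfl
      show u w = M
      rw [this, hzM]
  -- conclude A = univ
  have hAuniv : A = Set.univ := IsClopen.eq_univ ⟨hAclosed, hAopen⟩ hAne
  obtain ⟨w₂, hw₂⟩ := (Set.ne_univ_iff_exists_notMem D).mp hDne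
  have hfw₂ : f w₂ = 0 := hvanish w₂ hw₂
  have hw₂A : w₂ ∈ A := hAuniv ▸ Set.mem_univ w₂
  have : u w₂ = M := hw₂A
  rw [hu_def] at this
  simp only [hfw₂, norm_zero] at this
  linarith
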